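/- arXiv:2412.18888 — 2 statements merged into one kernel-verified Lean document; each statement's English description precedes it below -/
import Mathlib

section
/- Let X be a nonempty metric space with diam_u X < t < ∞. Then the subset D_t(X) of C_b(X) is path-connected. -/
open scoped ENNReal

noncomputable section

/-- Ultrametric pseudodistance: infimum over chains from `x` to `y` of the
maximal edge length of the chain. -/
noncomputable def ultraDist {X : Type*} [MetricSpace X] (x y : X) : ℝ≥0∞ :=
  ⨅ (n : ℕ) (f : Fin (n + 1) → X) (_ : f 0 = x) (_ : f (Fin.last n) = y),
    ⨆ i : Fin n, edist (f i.castSucc) (f i.succ)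

/-- Ultrametric pseudodiameter. -/
noncomputable def ultraDiam (X : Type*) [MetricSpace X] : ℝ≥0∞ :=
  ⨆ (x : X) (y : X), ultraDist x y

/-- A correspondence between `X` and `Y`: a relation whose projections are surjective. -/
def IsCorrespondence {X Y : Type*} (R : Set (X × Y)) : Prop :=
  (∀ x : X, ∃ y : Y, (x, y) ∈ R) ∧ (∀ y : Y, ∃ x : X, (x, y) ∈ R)

/-- Distortion of a relation. -/
noncomputable def distortion {X Y : Type*} [MetricSpace X] [MetricSpace Y]
    (R : Set (X × Y)) : ℝ≥0∞ :=
  ⨆ (p ∈ R) (q ∈ R), ENNReal.ofReal |dist p.1 q.1 - dist p.2 q.2|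

/-- Gromov–Hausdorff distance: half the infimal distortion of correspondences. -/
noncomputable def ghDist (X Y : Type*) [MetricSpace X] [MetricSpace Y] : ℝ≥0∞ :=
  (⨅ (R : Set (X × Y)) (_ : IsCorrespondence R), distortion R) / 2


/-- The Kuratowski embedding `x ↦ d(x,·) − d(x₀,·)` into the Banach space of
bounded continuous real functions on `X`. -/
noncomputable def kuratowskiMap {X : Type*} [MetricSpace X] (x₀ : X) (x : X) :
    BoundedContinuousFunction X ℝ :=
  BoundedContinuousFunction.mkOfBound
    ⟨fun y => dist x y - dist x₀ y, by fun_prop⟩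
    (2 * dist x x₀)
    (fun y y' => by
      have h1 : |dist x y - dist x₀ y| ≤ dist x x₀ := abs_dist_sub_le x x₀ y
      have h2 : |dist x y' - dist x₀ y'| ≤ dist x x₀ := abs_dist_sub_le x x₀ y'
      have h3 : |dist x y - dist x₀ y - (dist x y' - dist x₀ y')|
          ≤ |dist x y - dist x₀ y| + |dist x y' - dist x₀ y'| := abs_sub _ _
      simp only [ContinuousMap.coe_mk, Real.dist_eq]
      linarith)

/-- The set `D_t(X)`: the image of the Kuratowski embedding together with all
segments joining images of points at distance at most `t`. -/
noncomputable def Dset {X : Type*} [MetricSpace X] (x₀ : X) (t : ℝ) :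
    Set (BoundedContinuousFunction X ℝ) :=
  Set.range (kuratowskiMap x₀) ∪
    ⋃ (p : X × X) (_ : dist p.1 p.2 ≤ t),
      segment ℝ (kuratowskiMap x₀ p.1) (kuratowskiMap x₀ p.2)

/-!
If `diam_u X < t`, any two points are linked by a chain whose steps are shorter than `t`; the
Kuratowski images of consecutive points of the chain are joined by a segment lying in `D_t(X)`.
So every `Φ x` is joined to `Φ x₀` inside `D_t(X)`, and so is every point of a segment of
`D_t(X)`, through the endpoint of its segment.
-/

open Relation

theorem Relation.ReflTransGen.of_fin_chain {α : Type*} {r : α → α → Prop} :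
    ∀ {n : ℕ} (f : Fin (n + 1) → α), (∀ i : Fin n, r (f i.castSucc) (f i.succ)) →
      ReflTransGen r (f 0) (f (Fin.last n))
  | 0, _, _ => .refl
  | n + 1, f, hf => by
    have hinit : ReflTransGen r (f 0) (f (Fin.last n).castSucc) :=
      of_fin_chain (f ∘ Fin.castSucc) fun i => by simpa using hf i.castSucc
    exact hinit.tail (by simpa using hf (Fin.last n))

theorem reflTransGen_edist_lt_of_ultraDist_lt {X : Type*} [MetricSpace X] {x y : X}
    {r : ℝ≥0∞} (h : ultraDist x y < r) : ReflTransGen (fun a b => edist a b < r) x y := by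
  simp only [ultraDist, iInf_lt_iff, iSup_lt_iff] at h
  obtain ⟨n, f, rfl, rfl, s, hs, hsteps⟩ := h
  exact .of_fin_chain f fun i => (hsteps i).trans_lt hs

theorem ultraDist_le_ultraDiam {X : Type*} [MetricSpace X] (x y : X) :
    ultraDist x y ≤ ultraDiam X :=
  le_iSup₂ (f := fun x y => ultraDist x y) x y

section Dset

variable {X : Type*} [MetricSpace X] (x₀ : X) {t : ℝ}

theorem kuratowskiMap_mem_Dset (x : X) : kuratowskiMap x₀ x ∈ Dset x₀ t :=
  .inl ⟨x, rfl⟩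

theorem segment_subset_Dset {x y : X} (hxy : dist x y ≤ t) :
    segment ℝ (kuratowskiMap x₀ x) (kuratowskiMap x₀ y) ⊆ Dset x₀ t :=
  fun _ hz => .inr <| Set.mem_iUnion₂.2 ⟨(x, y), hxy, hz⟩

theorem joinedIn_Dset_of_ultraDist_lt {x y : X} (h : ultraDist x y < ENNReal.ofReal t) :
    JoinedIn (Dset x₀ t) (kuratowskiMap x₀ x) (kuratowskiMap x₀ y) := by
  obtain hchain := reflTransGen_edist_lt_of_ultraDist_lt h
  clear h
  induction hchain with
  | refl => exact .refl (kuratowskiMap_mem_Dset x₀ x)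
  | tail _ hstep ih =>
    exact ih.trans <| .of_segment_subset <| segment_subset_Dset x₀ (edist_lt_ofReal.1 hstep).le

end Dset

theorem Dset_pathConnected_general {X : Type*} [MetricSpace X] (x₀ : X) (t : ℝ)
    (h : ultraDiam X < ENNReal.ofReal t) :
    IsPathConnected (Dset x₀ t) := by
  have hjoined (x : X) : JoinedIn (Dset x₀ t) (kuratowskiMap x₀ x₀) (kuratowskiMap x₀ x) :=
    joinedIn_Dset_of_ultraDist_lt x₀ ((ultraDist_le_ultraDiam x₀ x).trans_lt h)
  refine ⟨kuratowskiMap x₀ x₀, kuratowskiMap_mem_Dset x₀ x₀, ?_⟩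
  rintro z (⟨x, rfl⟩ | hz)
  · exact hjoined x
  · obtain ⟨⟨x, y⟩, hxy, hz⟩ := Set.mem_iUnion₂.1 hz
    have hsub : segment ℝ (kuratowskiMap x₀ x) z ⊆ Dset x₀ t :=
      ((convex_segment _ _).segment_subset (left_mem_segment ℝ _ _) hz).trans
        (segment_subset_Dset x₀ hxy)
    exact (hjoined x).trans (.of_segment_subset hsub)

/-- if `diam_u X < t < ∞`, then `D_t(X)` is path-connected. -/
theorem Dset_pathConnected {X : Type*} [MetricSpace X] [Nonempty X] (x₀ : X) (t : ℝ)
    (h : ultraDiam X < ENNReal.ofReal t) :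
    IsPathConnected (Dset x₀ t) :=
  Dset_pathConnected_general x₀ t h

end
end

section
/- Let n ≥ 1, let ℝⁿ_∞ be ℝⁿ with the sup-norm metric, and let ℤⁿ_∞ be the integer lattice with the induced metric. Then d_H(ℝⁿ_∞, ℤⁿ_∞) = d_GH(ℝⁿ_∞, ℤⁿ_∞) = 1/2. -/
open scoped ENNReal

noncomputable section

/-- The integer lattice inside `ℝⁿ` with the sup-norm metric (the product
metric on `Fin n → ℝ` is the sup-metric). -/
def latticeSet (n : ℕ) : Set (Fin n → ℝ) :=
  Set.range (fun (z : Fin n → ℤ) (i : Fin n) => (z i : ℝ))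

/-! Rounding every coordinate moves a point of `ℝⁿ` by at most `1/2` in the sup-norm, and the
centre of a unit cube is at distance exactly `1/2` from the lattice; hence the Hausdorff distance
is `1/2`, and it bounds the Gromov–Hausdorff distance from above. Conversely, if a correspondence
between `ℝⁿ` and `ℤⁿ` had distortion `< 1`, any map `ℝⁿ → ℤⁿ` selected from it would send points
closer than `1 - dis R` to lattice points closer than `1`, i.e. to the same point; being locally
constant on the connected space `ℝⁿ`, it would be constant, which is incompatible with `ℤⁿ` having
two points. -/

open Metric Set

section Distortion

variable {X Y : Type*} [MetricSpace X] [MetricSpace Y]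

theorem ofReal_abs_dist_sub_dist_le_distortion {R : Set (X × Y)} {p q : X × Y}
    (hp : p ∈ R) (hq : q ∈ R) :
    ENNReal.ofReal |dist p.1 q.1 - dist p.2 q.2| ≤ distortion R :=
  le_iSup₂_of_le p hp (le_iSup₂_of_le q hq le_rfl)

theorem edist_le_edist_add_distortion {R : Set (X × Y)} {x x' : X} {y y' : Y}
    (h : (x, y) ∈ R) (h' : (x', y') ∈ R) :
    edist y y' ≤ edist x x' + distortion R :=
  calc edist y y' = ENNReal.ofReal (dist y y') := edist_dist y y'
    _ ≤ ENNReal.ofReal (dist x x' + |dist x x' - dist y y'|) :=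
        ENNReal.ofReal_le_ofReal <| by linarith [neg_abs_le (dist x x' - dist y y')]
    _ = ENNReal.ofReal (dist x x') + ENNReal.ofReal |dist x x' - dist y y'| :=
        ENNReal.ofReal_add dist_nonneg (abs_nonneg _)
    _ ≤ edist x x' + distortion R := by
        rw [edist_dist]
        gcongr
        exact ofReal_abs_dist_sub_dist_le_distortion h h'

theorem ghDist_le_distortion_div_two {R : Set (X × Y)} (hR : IsCorrespondence R) :
    ghDist X Y ≤ distortion R / 2 :=
  ENNReal.div_le_div_right (iInf₂_le R hR) 2

theorem div_two_le_ghDist {c : ℝ≥0∞}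
    (h : ∀ R : Set (X × Y), IsCorrespondence R → c ≤ distortion R) : c / 2 ≤ ghDist X Y :=
  ENNReal.div_le_div_right (le_iInf₂ h) 2

theorem le_distortion_of_preconnectedSpace [PreconnectedSpace X] [Nontrivial Y] {δ : ℝ≥0∞}
    (hY : ∀ y y' : Y, y ≠ y' → δ ≤ edist y y') {R : Set (X × Y)} (hR : IsCorrespondence R) :
    δ ≤ distortion R := by
  by_contra! hlt
  have eq_of_edist_lt : ∀ {x x' : X} {y y' : Y}, (x, y) ∈ R → (x', y') ∈ R →
      edist x x' < δ - distortion R → y = y' := by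
    intro x x' y y' h h' hxx'
    by_contra hne
    exact (hY y y' hne).not_gt
      ((edist_le_edist_add_distortion h h').trans_lt (lt_tsub_iff_right.1 hxx'))
  have hgap : 0 < δ - distortion R := tsub_pos_of_lt hlt
  choose f hf using hR.1
  have hf_const : IsLocallyConstant f := (IsLocallyConstant.iff_eventually_eq f).2 fun x =>
    Filter.mem_of_superset (eball_mem_nhds x hgap)
      fun x' hx' => eq_of_edist_lt (hf x') (hf x) hx'
  obtain ⟨y₀, y₁, hne⟩ := exists_pair_ne Y
  obtain ⟨x₀, h₀⟩ := hR.2 y₀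
  obtain ⟨x₁, h₁⟩ := hR.2 y₁
  refine hne ?_
  calc y₀ = f x₀ := eq_of_edist_lt h₀ (hf x₀) (by rwa [edist_self])
    _ = f x₁ := hf_const.apply_eq_of_preconnectedSpace _ _
    _ = y₁ := eq_of_edist_lt (hf x₁) h₁ (by rwa [edist_self])

theorem distortion_le_of_dist_le {A : Set X} {r : ℝ} {R : Set (X × A)}
    (hR : ∀ p ∈ R, dist p.1 p.2 ≤ r) : distortion R ≤ ENNReal.ofReal (2 * r) :=
  iSup₂_le fun p hp => iSup₂_le fun q hq => ENNReal.ofReal_le_ofReal <| by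
    have hp' := hR p hp
    have hq' := hR q hq
    rw [Subtype.dist_eq, abs_le]
    constructor <;>
      linarith [dist_triangle4 p.1 p.2 q.2 q.1, dist_triangle4 (p.2 : X) p.1 q.1 q.2,
        dist_comm p.1 (p.2 : X), dist_comm q.1 (q.2 : X)]

theorem ghDist_le_hausdorffEDist (A : Set X) : ghDist X A ≤ hausdorffEDist A univ := by
  refine ENNReal.le_of_forall_pos_le_add fun ε hε hfin => ?_
  obtain ⟨r, hr₀, hr⟩ : ∃ r : ℝ, 0 ≤ r ∧ ENNReal.ofReal r = hausdorffEDist A univ + ε :=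
    ⟨_, add_nonneg ENNReal.toReal_nonneg ε.2, by
      rw [ENNReal.ofReal_add ENNReal.toReal_nonneg ε.2, ENNReal.ofReal_toReal hfin.ne]; simp⟩
  let R : Set (X × A) := {p | dist p.1 p.2 ≤ r}
  have hR : IsCorrespondence R := by
    refine ⟨fun x => ?_, fun a => ⟨a, by simpa [R] using hr₀⟩⟩
    have hx : infEDist x A < ENNReal.ofReal r := by
      rw [hr]
      exact ((infEDist_le_hausdorffEDist_of_mem (mem_univ x)).trans_eq hausdorffEDist_comm).trans_lt
        (ENNReal.lt_add_right hfin.ne (by simpa using hε.ne'))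
    obtain ⟨a, ha, hxa⟩ := infEDist_lt_iff.1 hx
    exact ⟨⟨a, ha⟩, (edist_lt_ofReal.1 hxa).le⟩
  calc ghDist X A ≤ distortion R / 2 := ghDist_le_distortion_div_two hR
    _ ≤ ENNReal.ofReal (2 * r) / 2 :=
        ENNReal.div_le_div_right (distortion_le_of_dist_le fun _ => id) 2
    _ = hausdorffEDist A univ + ε := by
        rw [mul_comm, ENNReal.ofReal_mul' zero_le_two, ENNReal.ofReal_ofNat, hr,
          ENNReal.mul_div_cancel_right two_ne_zero ENNReal.ofNat_ne_top]

end Distortion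

section Lattice

variable {n : ℕ}

theorem half_le_abs_half_sub_intCast (z : ℤ) : (1 / 2 : ℝ) ≤ |1 / 2 - (z : ℝ)| := by
  rcases le_or_gt z 0 with hz | hz
  · have : (z : ℝ) ≤ 0 := by exact_mod_cast hz
    rw [abs_of_nonneg (by linarith)]
    linarith
  · have : (1 : ℝ) ≤ z := by exact_mod_cast hz
    rw [abs_of_nonpos (by linarith)]
    linarith

theorem infEDist_latticeSet_le_half (x : Fin n → ℝ) : infEDist x (latticeSet n) ≤ 1 / 2 :=
  calc infEDist x (latticeSet n) ≤ edist x (fun i => (round (x i) : ℝ)) :=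
        infEDist_le_edist_of_mem ⟨_, rfl⟩
    _ ≤ ENNReal.ofReal (1 / 2) := (edist_le_ofReal (by norm_num)).2 <|
        (dist_pi_le_iff (by norm_num)).2 fun i => abs_sub_round (x i)
    _ = 1 / 2 := by simp

theorem half_le_infEDist_latticeSet (i : Fin n) :
    1 / 2 ≤ infEDist (fun _ => 1 / 2 : Fin n → ℝ) (latticeSet n) := by
  refine le_infEDist.2 ?_
  rintro _ ⟨z, rfl⟩
  calc (1 / 2 : ℝ≥0∞) = ENNReal.ofReal (1 / 2) := by simp
    _ ≤ edist (1 / 2 : ℝ) (z i) := by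
        rw [edist_dist, Real.dist_eq]
        exact ENNReal.ofReal_le_ofReal (half_le_abs_half_sub_intCast (z i))
    _ ≤ edist (fun _ => 1 / 2 : Fin n → ℝ) (fun i => (z i : ℝ)) := edist_le_pi_edist _ _ i

theorem hausdorffEDist_latticeSet_univ (hn : 0 < n) :
    hausdorffEDist (latticeSet n) univ = 1 / 2 := by
  refine le_antisymm (hausdorffEDist_le_of_infEDist (fun y _ => ?_)
    (fun x _ => infEDist_latticeSet_le_half x)) ?_
  · simp [infEDist_zero_of_mem (mem_univ y)]
  · rw [hausdorffEDist_comm]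
    exact (half_le_infEDist_latticeSet ⟨0, hn⟩).trans
      (infEDist_le_hausdorffEDist_of_mem (mem_univ _))

theorem one_le_edist_of_mem_latticeSet {y y' : Fin n → ℝ} (hy : y ∈ latticeSet n)
    (hy' : y' ∈ latticeSet n) (hne : y ≠ y') : 1 ≤ edist y y' := by
  obtain ⟨z, rfl⟩ := hy
  obtain ⟨z', rfl⟩ := hy'
  obtain ⟨i, hi⟩ := Function.ne_iff.1 hne
  calc (1 : ℝ≥0∞) ≤ edist (z i : ℝ) (z' i) := by
        rw [edist_dist, Int.dist_cast_real]
        exact ENNReal.one_le_ofReal.2 (Int.pairwise_one_le_dist fun h => hi (congrArg Int.cast h))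
    _ ≤ edist (fun i => (z i : ℝ)) (fun i => (z' i : ℝ)) := edist_le_pi_edist _ _ i

theorem nontrivial_latticeSet (hn : 0 < n) : Nontrivial (latticeSet n) :=
  nontrivial_of_ne ⟨_, (⟨0, rfl⟩ : (fun _ => ((0 : ℤ) : ℝ)) ∈ latticeSet n)⟩
    ⟨_, (⟨1, rfl⟩ : (fun _ => ((1 : ℤ) : ℝ)) ∈ latticeSet n)⟩
    fun h => by simpa using congrFun (congrArg Subtype.val h) ⟨0, hn⟩

end Lattice

/-- for `n ≥ 1`, both the Hausdorff distance and the
Gromov–Hausdorff distance between `ℝⁿ_∞` (with the sup-norm metric) and the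
integer lattice `ℤⁿ_∞` (induced metric) equal `1/2`. -/
theorem hausdorff_eq_ghDist_intLattice (n : ℕ) (hn : 1 ≤ n) :
    EMetric.hausdorffEdist (latticeSet n) (Set.univ : Set (Fin n → ℝ)) = 1 / 2 ∧
    ghDist (Fin n → ℝ) (latticeSet n) = 1 / 2 := by
  have hH := hausdorffEDist_latticeSet_univ hn
  have := nontrivial_latticeSet hn
  refine ⟨hH, le_antisymm (hH ▸ ghDist_le_hausdorffEDist _) ?_⟩
  exact div_two_le_ghDist fun _ => le_distortion_of_preconnectedSpace
    fun (y y' : latticeSet n) hne =>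
      one_le_edist_of_mem_latticeSet y.2 y'.2 (Subtype.coe_ne_coe.2 hne)

end
end
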